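/- arXiv:1611.04056 — 6 statements merged into one kernel-verified Lean document; each statement's English description precedes it below -/
import Mathlib

section
/- With the setup below, u(r) ≥ 1 for every r > 0; moreover u(r) = b + a/2 + r^{−ε} for 0 < r ≤ 1 and u(r) = 1 + a/r for r ≥ 2. In particular u > 0 everywhere on (0,∞). -/
open MeasureTheory

/-- with the setup of Proposition 2.2 and `u = φ + b + a/2 + 1`, one has
`u(r) ≥ 1` for every `r > 0`; moreover `u(r) = b + a/2 + r^{-ε}` for `0 < r ≤ 1` and
`u(r) = 1 + a/r` for `r ≥ 2`. In particular `u > 0` everywhere on `(0,∞)`. -/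
theorem stmt_3 (ε : ℝ) (hε : ε ∈ Set.Ioo (0 : ℝ) (1 / 2))
    (η : ℝ → ℝ) (hη : ContinuousOn η (Set.Ioi 0))
    (hη1 : ∀ r : ℝ, 0 < r → r ≤ 1 → η r = -(ε * (1 - ε)) * r ^ (-ε - 2))
    (hη2 : ∀ r : ℝ, 1 ≤ r → r ≤ 2 → η r ≤ 0)
    (hη3 : ∀ r : ℝ, 2 ≤ r → η r = 0)
    (φ : ℝ → ℝ)
    (hφ : ∀ r > (0 : ℝ),
      φ r = ∫ s in (1 : ℝ)..r, (∫ t in Set.Ioo (0 : ℝ) s, t ^ 2 * η t) / s ^ 2)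
    (a b : ℝ)
    (ha : a = -∫ s in Set.Ioi (0 : ℝ), s ^ 2 * η s)
    (hb : b = -∫ s in (1 : ℝ)..2, (∫ t in Set.Ioo (0 : ℝ) s, t ^ 2 * η t) / s ^ 2)
    (u : ℝ → ℝ) (hu : ∀ r : ℝ, u r = φ r + b + a / 2 + 1) :
    (∀ r : ℝ, 0 < r → 1 ≤ u r) ∧
    (∀ r : ℝ, 0 < r → r ≤ 1 → u r = b + a / 2 + r ^ (-ε)) ∧
    (∀ r : ℝ, 2 ≤ r → u r = 1 + a / r) ∧
    (∀ r : ℝ, 0 < r → 0 < u r) := by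
  obtain ⟨hε0, hε2⟩ := hε
  have hε1 : ε < 1 := by linarith
  set f : ℝ → ℝ := fun t => t ^ 2 * η t with hf_def
  -- f is nonpositive on (0,∞)
  have hη_nonpos : ∀ t : ℝ, 0 < t → η t ≤ 0 := by
    intro t ht
    rcases le_or_gt t 1 with h1 | h1
    · rw [hη1 t ht h1]
      have h2 : (0:ℝ) < t ^ (-ε - 2) := Real.rpow_pos_of_pos ht _
      nlinarith [mul_pos (mul_pos hε0 (by linarith : (0:ℝ) < 1 - ε)) h2]
    · rcases le_or_gt t 2 with h2 | h2
      · exact hη2 t h1.le h2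
      · rw [hη3 t h2.le]
  have hf_nonpos : ∀ t : ℝ, 0 < t → f t ≤ 0 := fun t ht =>
    mul_nonpos_of_nonneg_of_nonpos (sq_nonneg t) (hη_nonpos t ht)
  -- f equals a power function on (0,1]
  have hf_small : ∀ t : ℝ, 0 < t → t ≤ 1 → f t = -(ε * (1 - ε)) * t ^ (-ε) := by
    intro t ht h1
    rw [hf_def]
    simp only
    have h2 : t ^ (2:ℕ) = t ^ ((2:ℝ)) := by
      rw [← Real.rpow_natCast t 2]; norm_num
    have h3 : t ^ ((2:ℝ)) * t ^ (-ε - 2) = t ^ (-ε) := by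
      rw [← Real.rpow_add ht]; norm_num
    rw [hη1 t ht h1, h2, ← h3]; ring
  -- integrability of f on (0,∞)
  have hf_int : IntegrableOn f (Set.Ioi 0) := by
    have h01 : IntegrableOn f (Set.Ioc 0 1) := by
      have : IntervalIntegrable (fun x : ℝ => x ^ (-ε)) volume 0 1 :=
        intervalIntegral.intervalIntegrable_rpow' (by linarith)
      have h2 : IntegrableOn (fun x : ℝ => -(ε * (1 - ε)) * x ^ (-ε)) (Set.Ioc 0 1) :=
        ((intervalIntegrable_iff_integrableOn_Ioc_of_le zero_le_one).1 this).const_mul _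
      exact (integrableOn_congr_fun (fun t ht => (hf_small t ht.1 ht.2).symm)
        measurableSet_Ioc).1 h2
    have h12 : IntegrableOn f (Set.Ioc 1 2) := by
      have : ContinuousOn f (Set.Icc 1 2) := by
        apply ContinuousOn.mul (continuousOn_pow 2)
        exact hη.mono (fun x hx => lt_of_lt_of_le zero_lt_one hx.1)
      exact (this.integrableOn_Icc).mono_set Set.Ioc_subset_Icc_self
    have h2i : IntegrableOn f (Set.Ioi 2) := by
      apply IntegrableOn.congr_fun integrableOn_zero _ measurableSet_Ioi
      intro t ht
      simp [hf_def, hη3 t (le_of_lt ht)]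
    have : IntegrableOn f (Set.Ioc 0 2) := by
      rw [← Set.Ioc_union_Ioc_eq_Ioc (by norm_num : (0:ℝ) ≤ 1) (by norm_num : (1:ℝ) ≤ 2)]
      exact h01.union h12
    rw [← Set.Ioc_union_Ioi_eq_Ioi (by norm_num : (0:ℝ) ≤ 2)]
    exact this.union h2i
  -- a is nonneg
  have ha_nonneg : 0 ≤ a := by
    rw [ha, neg_nonneg]
    apply integral_nonpos_of_ae
    rw [Filter.EventuallyLE, ae_restrict_iff' measurableSet_Ioi]
    exact Filter.Eventually.of_forall fun t ht => hf_nonpos t ht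
  -- indicator function and its primitive
  set F : ℝ → ℝ := (Set.Ioi 0).indicator f with hF_def
  have hF_int : Integrable F := (integrable_indicator_iff measurableSet_Ioi).2 hf_int
  have hF_nonpos : ∀ t, F t ≤ 0 := by
    intro t
    rw [hF_def]
    by_cases h : t ∈ Set.Ioi 0
    · rw [Set.indicator_of_mem h]; exact hf_nonpos t h
    · rw [Set.indicator_of_notMem h]
  set J : ℝ → ℝ := fun s => ∫ t in (0:ℝ)..s, F t with hJ_def
  have hJ_cont : Continuous J := hF_int.continuous_primitive 0
  -- J equals the inner integral for s > 0
  have hIJ : ∀ s : ℝ, 0 < s → (∫ t in Set.Ioo (0:ℝ) s, f t) = J s := by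
    intro s hs
    rw [hJ_def]
    simp only
    rw [intervalIntegral.integral_of_le hs.le, ← integral_Ioc_eq_integral_Ioo]
    exact (setIntegral_congr_fun measurableSet_Ioc
      (fun t ht => (Set.indicator_of_mem (Set.mem_Ioi.2 ht.1) f).symm))
  have hJ_nonpos : ∀ s : ℝ, 0 ≤ s → J s ≤ 0 := by
    intro s hs
    have : 0 ≤ ∫ t in (0:ℝ)..s, -F t :=
      intervalIntegral.integral_nonneg hs (fun t _ => neg_nonneg.2 (hF_nonpos t))
    rw [intervalIntegral.integral_neg] at this
    linarith
  -- J on (0,1]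
  have hJ_small : ∀ s : ℝ, 0 < s → s ≤ 1 → J s = -ε * s ^ (1 - ε) := by
    intro s hs h1
    rw [← hIJ s hs]
    have : (∫ t in Set.Ioo (0:ℝ) s, f t) = ∫ t in Set.Ioo (0:ℝ) s, -(ε * (1 - ε)) * t ^ (-ε) :=
      setIntegral_congr_fun measurableSet_Ioo
        (fun t ht => hf_small t ht.1 (le_trans ht.2.le h1))
    rw [this, ← integral_Ioc_eq_integral_Ioo, ← intervalIntegral.integral_of_le hs.le,
      intervalIntegral.integral_const_mul, integral_rpow (Or.inl (by linarith))]
    rw [Real.zero_rpow (by linarith : -ε + 1 ≠ 0)]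
    have h1ε : (1:ℝ) - ε ≠ 0 := by linarith
    have : -ε + 1 = 1 - ε := by ring
    rw [this]
    field_simp
    ring
  -- J for s ≥ 2
  have hJ_large : ∀ s : ℝ, 2 ≤ s → J s = -a := by
    intro s hs
    have hs0 : (0:ℝ) < s := by linarith
    rw [← hIJ s hs0, ha, neg_neg]
    have hsplit : Set.Ioi (0:ℝ) = Set.Ioo 0 s ∪ Set.Ici s := (Set.Ioo_union_Ici_eq_Ioi hs0).symm
    have hzero : (∫ t in Set.Ici s, f t) = 0 := by
      rw [setIntegral_congr_fun measurableSet_Ici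
        (fun t (ht : s ≤ t) => by simp [hf_def, hη3 t (le_trans hs ht)] : Set.EqOn f 0 _)]
      simp
    rw [hsplit, setIntegral_union ((Set.Iio_disjoint_Ici le_rfl).mono_left Set.Ioo_subset_Iio_self) measurableSet_Ici
      (hf_int.mono_set (by rw [hsplit]; exact Set.subset_union_left))
      (hf_int.mono_set (by rw [hsplit]; exact Set.subset_union_right)), hzero, add_zero]
  -- The function G
  set G : ℝ → ℝ := fun s => J s / s ^ 2 with hG_def
  have hG_cont : ContinuousOn G {(0:ℝ)}ᶜ := by
    apply ContinuousOn.div hJ_cont.continuousOn (continuous_pow 2).continuousOn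
    intro x hx
    simp only [Set.mem_compl_iff, Set.mem_singleton_iff] at hx
    exact pow_ne_zero 2 hx
  have hG_int : ∀ c d : ℝ, 0 < c → 0 < d → IntervalIntegrable G volume c d := by
    intro c d hc hd
    apply (hG_cont.mono _).intervalIntegrable
    intro x hx
    simp only [Set.mem_compl_iff, Set.mem_singleton_iff]
    have := Set.uIcc_subset_uIcc_iff_le.mp (le_refl (Set.uIcc c d))
    have hx' := (Set.mem_uIcc.1 hx)
    rcases hx' with h | h
    · nlinarith [h.1, h.2]
    · nlinarith [h.1, h.2]
  -- φ in terms of G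
  have hφG : ∀ r : ℝ, 0 < r → φ r = ∫ s in (1:ℝ)..r, G s := by
    intro r hr
    rw [hφ r hr]
    apply intervalIntegral.integral_congr
    intro s hs
    have hs0 : 0 < s := by
      rcases Set.mem_uIcc.1 hs with h | h
      · nlinarith [h.1, h.2]
      · nlinarith [h.1, h.2]
    show (∫ t in Set.Ioo (0:ℝ) s, f t) / s ^ 2 = J s / s ^ 2
    rw [hIJ s hs0]
  have hbG : b = -∫ s in (1:ℝ)..2, G s := by
    rw [hb]
    congr 1
    apply intervalIntegral.integral_congr
    intro s hs
    rw [Set.uIcc_of_le (by norm_num : (1:ℝ) ≤ 2)] at hs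
    show (∫ t in Set.Ioo (0:ℝ) s, f t) / s ^ 2 = J s / s ^ 2
    rw [hIJ s (by linarith [hs.1] : (0:ℝ) < s)]
  -- Part 2: formula on (0,1]
  have part2 : ∀ r : ℝ, 0 < r → r ≤ 1 → u r = b + a / 2 + r ^ (-ε) := by
    intro r hr h1
    have hG_eq : Set.EqOn G (fun s => -ε * s ^ (-1 - ε)) (Set.uIcc 1 r) := by
      intro s hs
      rw [Set.uIcc_of_ge h1] at hs
      obtain ⟨hs1, hs2⟩ := hs
      have hs0 : 0 < s := lt_of_lt_of_le hr hs1
      rw [hG_def]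
      simp only
      rw [hJ_small s hs0 hs2, ← Real.rpow_natCast s 2, div_eq_mul_inv, ← Real.rpow_neg hs0.le,
        mul_assoc, ← Real.rpow_add hs0]
      have hexp : (1 - ε) + -((2:ℕ):ℝ) = -1 - ε := by push_cast; ring
      rw [hexp]
    have hne : (-1 - ε : ℝ) ≠ -1 := by intro h; exact hε0.ne' (by linarith)
    have hmem : (0:ℝ) ∉ Set.uIcc 1 r := by
      rw [Set.uIcc_of_ge h1]
      exact fun h0 => absurd h0.1 (not_le.2 hr)
    have : φ r = r ^ (-ε) - 1 := by
      rw [hφG r hr, intervalIntegral.integral_congr hG_eq,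
        intervalIntegral.integral_const_mul,
        integral_rpow (Or.inr ⟨hne, hmem⟩)]
      have : -1 - ε + 1 = -ε := by ring
      rw [this, Real.one_rpow]
      field_simp
    rw [hu r, this]
    ring
  -- Part 3: formula on [2,∞)
  have part3 : ∀ r : ℝ, 2 ≤ r → u r = 1 + a / r := by
    intro r hr
    have hr0 : (0:ℝ) < r := by linarith
    have hsplit : (∫ s in (1:ℝ)..2, G s) + (∫ s in (2:ℝ)..r, G s) = ∫ s in (1:ℝ)..r, G s :=
      intervalIntegral.integral_add_adjacent_intervals
        (hG_int 1 2 one_pos two_pos) (hG_int 2 r two_pos hr0)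
    have h2r : (∫ s in (2:ℝ)..r, G s) = a / r - a / 2 := by
      have hG_eq : Set.EqOn G (fun s => -a * s ^ (-2:ℝ)) (Set.uIcc 2 r) := by
        intro s hs
        rw [Set.uIcc_of_le hr] at hs
        obtain ⟨hs1, hs2⟩ := hs
        have hs0 : 0 < s := by linarith
        rw [hG_def]
        simp only
        rw [hJ_large s hs1, ← Real.rpow_natCast s 2, div_eq_mul_inv, ← Real.rpow_neg hs0.le]
        norm_num
      have hmem : (0:ℝ) ∉ Set.uIcc 2 r := by
        rw [Set.uIcc_of_le hr]
        exact fun h0 => absurd h0.1 (by norm_num)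
      rw [intervalIntegral.integral_congr hG_eq, intervalIntegral.integral_const_mul,
        integral_rpow (Or.inr ⟨by norm_num, hmem⟩)]
      norm_num
      rw [Real.rpow_neg_one]
      field_simp
    have hφr : φ r = -b + (a / r - a / 2) := by
      rw [hφG r hr0, ← hsplit, h2r, hbG]
      ring
    rw [hu r, hφr]
    ring
  -- Part 1
  have part1 : ∀ r : ℝ, 0 < r → 1 ≤ u r := by
    intro r hr
    rcases le_or_gt 2 r with h2 | h2
    · rw [part3 r h2]
      have : 0 ≤ a / r := div_nonneg ha_nonneg hr.le
      linarith
    · have hsplit : (∫ s in (1:ℝ)..r, G s) + (∫ s in r..2, G s) = ∫ s in (1:ℝ)..2, G s :=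
        intervalIntegral.integral_add_adjacent_intervals
          (hG_int 1 r one_pos hr) (hG_int r 2 hr two_pos)
      have hneg : (∫ s in r..2, G s) ≤ 0 := by
        have : 0 ≤ ∫ s in r..2, -G s := by
          apply intervalIntegral.integral_nonneg h2.le
          intro s hs
          have hs0 : 0 < s := lt_of_lt_of_le hr hs.1
          rw [hG_def]
          simp only [neg_nonneg]
          exact div_nonpos_of_nonpos_of_nonneg (hJ_nonpos s hs0.le) (sq_nonneg s)
        rw [intervalIntegral.integral_neg] at this
        linarith
      have hφr : -b ≤ φ r := by
        rw [hφG r hr]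
        have h12 : (∫ s in (1:ℝ)..2, G s) = -b := by rw [hbG, neg_neg]
        linarith [hsplit, hneg, h12]
      rw [hu r]
      linarith
  exact ⟨part1, part2, part3, fun r hr => lt_of_lt_of_le zero_lt_one (part1 r hr)⟩
end

section
/- With the setup below, there exists C > 0 such that |u(r)⁴ r² − (1−2ε)² ρ(r)²| ≤ C r^{2−3ε} for all r ∈ (0, 1]; since ρ(r) is comparable to r^{1−2ε} near 0, this says u(r)⁴ r² = (1−2ε)² ρ(r)² (1 + O(ρ(r)^{δ})) as r → 0⁺ with δ = ε/(1−2ε) > 0. -/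
/-!
Substituting `s = r^(-ε)` turns both sides into polynomials in `s`: `u(r) = β₀ + s` and
`ρ(r) = r (β₀² + 2β₀ s / (1-ε) + s² / (1-2ε))`, so
`u⁴ r² - (1-2ε)² ρ² = r² ((β₀ + s)⁴ - (s² + b s + c)²)` for suitable constants `b, c`.
The `s⁴` terms cancel, and a cubic in `s` is `O(s³)` on `s ≥ 1`; since `r² s³ = r^(2-3ε)`, this is
the claimed bound.
-/

open MeasureTheory

lemma abs_sum_mul_pow_le_of_one_le {n : ℕ} (c : Fin (n + 1) → ℝ) {s : ℝ} (hs : 1 ≤ s) :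
    |∑ i, c i * s ^ (i : ℕ)| ≤ (∑ i, |c i|) * s ^ n := by
  rw [Finset.sum_mul]
  refine (Finset.abs_sum_le_sum_abs _ _).trans (Finset.sum_le_sum fun i _ => ?_)
  rw [abs_mul, abs_of_pos (by positivity : 0 < s ^ (i : ℕ))]
  exact mul_le_mul_of_nonneg_left (pow_le_pow_right₀ hs (Nat.lt_succ_iff.mp i.isLt)) (abs_nonneg _)

lemma exists_abs_add_pow_four_sub_sq_le (a b c : ℝ) :
    ∃ C > 0, ∀ s : ℝ, 1 ≤ s → |(a + s) ^ 4 - (s ^ 2 + b * s + c) ^ 2| ≤ C * s ^ 3 := by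
  let p : Fin 4 → ℝ := ![a ^ 4 - c ^ 2, 4 * a ^ 3 - 2 * b * c, 6 * a ^ 2 - b ^ 2 - 2 * c, 4 * a - 2 * b]
  refine ⟨∑ i, |p i| + 1, by positivity, fun s hs => ?_⟩
  have hcubic : (a + s) ^ 4 - (s ^ 2 + b * s + c) ^ 2 = ∑ i, p i * s ^ (i : ℕ) := by
    simp only [Fin.sum_univ_four, p, Fin.isValue, Matrix.cons_val_zero, Fin.coe_ofNat_eq_mod,
      Nat.zero_mod, pow_zero, mul_one, Matrix.cons_val_one, Nat.one_mod, pow_one, Matrix.cons_val,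
      Nat.reduceMod, Nat.mod_succ]
    ring
  rw [hcubic]
  exact (abs_sum_mul_pow_le_of_one_le p hs).trans (by gcongr; linarith)

lemma setIntegral_Ioo_add_rpow_neg_sq {ε : ℝ} (hε : ε < 1 / 2) (β : ℝ) {r : ℝ} (hr : 0 ≤ r) :
    ∫ t in Set.Ioo 0 r, (β + t ^ (-ε)) ^ 2
      = β ^ 2 * r + 2 * β / (1 - ε) * r ^ (1 - ε) + r ^ (1 - 2 * ε) / (1 - 2 * ε) := by
  have hexpand : ∀ t ∈ Set.uIcc 0 r,
      (β + t ^ (-ε)) ^ 2 = (β ^ 2 + 2 * β * t ^ (-ε)) + t ^ (-(2 * ε)) := by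
    intro t ht
    rw [Set.uIcc_of_le hr] at ht
    rw [show -(2 * ε) = -ε * (2 : ℕ) by push_cast; ring, Real.rpow_mul_natCast ht.1]
    ring
  have hint₁ : IntervalIntegrable (fun t : ℝ => t ^ (-ε)) volume 0 r :=
    intervalIntegral.intervalIntegrable_rpow' (by linarith)
  have hint₂ : IntervalIntegrable (fun t : ℝ => t ^ (-(2 * ε))) volume 0 r :=
    intervalIntegral.intervalIntegrable_rpow' (by linarith)
  rw [← integral_Ioc_eq_integral_Ioo, ← intervalIntegral.integral_of_le hr,
    intervalIntegral.integral_congr hexpand,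
    intervalIntegral.integral_add (intervalIntegrable_const.add (hint₁.const_mul _)) hint₂,
    intervalIntegral.integral_add intervalIntegrable_const (hint₁.const_mul _),
    intervalIntegral.integral_const_mul, intervalIntegral.integral_const,
    integral_rpow (Or.inl (by linarith)), integral_rpow (Or.inl (by linarith)),
    Real.zero_rpow (by linarith), Real.zero_rpow (by linarith)]
  have h₁ : 1 - ε ≠ 0 := by linarith
  have h₂ : 1 - 2 * ε ≠ 0 := by linarith
  rw [show -ε + 1 = 1 - ε by ring, show -(2 * ε) + 1 = 1 - 2 * ε by ring]
  field_simp
  ring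

lemma Real.rpow_natCast_sub_mul {r : ℝ} (hr : 0 < r) (n k : ℕ) (ε : ℝ) :
    r ^ ((n : ℝ) - k * ε) = r ^ n * (r ^ (-ε)) ^ k := by
  rw [sub_eq_add_neg, Real.rpow_add hr, Real.rpow_natCast, ← Real.rpow_mul_natCast hr.le]
  ring_nf

theorem stmt_5_general (ε β₀ : ℝ) (hε : ε ∈ Set.Ioo (0 : ℝ) (1 / 2))
    (u ρ : ℝ → ℝ)
    (hu : ∀ t : ℝ, 0 < t → u t = β₀ + t ^ (-ε))
    (hρ : ∀ r : ℝ, 0 ≤ r → ρ r = ∫ t in Set.Ioo (0 : ℝ) r, (u t) ^ 2) :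
    ∃ C > (0 : ℝ), ∀ r : ℝ, 0 < r → r ≤ 1 →
      |(u r) ^ 4 * r ^ 2 - (1 - 2 * ε) ^ 2 * (ρ r) ^ 2| ≤ C * r ^ (2 - 3 * ε) := by
  obtain ⟨hε₀, hε₁⟩ := hε
  have hK : 1 - 2 * ε ≠ 0 := by linarith
  have hε' : 1 - ε ≠ 0 := by linarith
  obtain ⟨C, hC, hbound⟩ := exists_abs_add_pow_four_sub_sq_le β₀
    ((1 - 2 * ε) * (2 * β₀ / (1 - ε))) ((1 - 2 * ε) * β₀ ^ 2)
  refine ⟨C, hC, fun r hr hr1 => ?_⟩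
  set s := r ^ (-ε)
  have hs : 1 ≤ s := Real.one_le_rpow_of_pos_of_le_one_of_nonpos hr hr1 (by linarith)
  have hpow₁ : r ^ (1 - ε) = r * s := by simpa using Real.rpow_natCast_sub_mul hr 1 1 ε
  have hpow₂ : r ^ (1 - 2 * ε) = r * s ^ 2 := by simpa using Real.rpow_natCast_sub_mul hr 1 2 ε
  have hpow₃ : r ^ (2 - 3 * ε) = r ^ 2 * s ^ 3 := by simpa using Real.rpow_natCast_sub_mul hr 2 3 ε
  have hρr : ρ r = r * (β₀ ^ 2 + 2 * β₀ / (1 - ε) * s + s ^ 2 / (1 - 2 * ε)) := by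
    rw [hρ r hr.le, setIntegral_congr_fun measurableSet_Ioo fun t ht => by rw [hu t ht.1],
      setIntegral_Ioo_add_rpow_neg_sq hε₁ β₀ hr.le, hpow₁, hpow₂]
    ring
  have hdiff : u r ^ 4 * r ^ 2 - (1 - 2 * ε) ^ 2 * ρ r ^ 2 = r ^ 2 * ((β₀ + s) ^ 4
      - (s ^ 2 + (1 - 2 * ε) * (2 * β₀ / (1 - ε)) * s + (1 - 2 * ε) * β₀ ^ 2) ^ 2) := by
    rw [show u r = β₀ + s from hu r hr, hρr]
    field_simp
    ring
  rw [hdiff, abs_mul, abs_of_pos (by positivity), hpow₃, mul_left_comm]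
  exact mul_le_mul_of_nonneg_left (hbound s hs) (by positivity)

/-- with `ε ∈ (0,1/2)`, `β₀ > 0`, `u(t) = β₀ + t^{-ε}` and
`ρ(r) = ∫₀^r u(t)² dt`, there exists `C > 0` such that
`|u(r)⁴ r² − (1−2ε)² ρ(r)²| ≤ C r^{2−3ε}` for all `r ∈ (0,1]`. -/
theorem stmt_5 (ε β₀ : ℝ) (hε : ε ∈ Set.Ioo (0 : ℝ) (1 / 2)) (hβ₀ : 0 < β₀)
    (u ρ : ℝ → ℝ)
    (hu : ∀ t : ℝ, 0 < t → u t = β₀ + t ^ (-ε))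
    (hρ : ∀ r : ℝ, 0 ≤ r → ρ r = ∫ t in Set.Ioo (0 : ℝ) r, (u t) ^ 2) :
    ∃ C > (0 : ℝ), ∀ r : ℝ, 0 < r → r ≤ 1 →
      |(u r) ^ 4 * r ^ 2 - (1 - 2 * ε) ^ 2 * (ρ r) ^ 2| ≤ C * r ^ (2 - 3 * ε) :=
  stmt_5_general ε β₀ hε u ρ hu hρ
end

section
/- Fix m > 0 and define ρ(t) = ∫₀^t s²/(s+2m)² ds for t ≥ 0, and c = (12m²)^{4/3}/(4m²). Then there exist C > 0 and t₀ > 0 such that |t⁴/(t+2m)² − c·ρ(t)^{4/3}| ≤ C ρ(t)^{5/3} for all t ∈ (0, t₀]; in particular t⁴/(t+2m)² = c ρ(t)^{4/3}(1 + O(ρ(t)^{1/3})) as t → 0⁺. -/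
open MeasureTheory

set_option maxHeartbeats 1000000 in
/-- for `m > 0`, `ρ(t) = ∫₀^t s²/(s+2m)² ds` and `c = (12m²)^{4/3}/(4m²)`,
there exist `C > 0` and `t₀ > 0` such that
`|t⁴/(t+2m)² − c·ρ(t)^{4/3}| ≤ C ρ(t)^{5/3}` for all `t ∈ (0,t₀]`. -/
theorem stmt_6 (m : ℝ) (hm : 0 < m)
    (ρ : ℝ → ℝ)
    (hρ : ∀ t : ℝ, 0 ≤ t → ρ t = ∫ s in (0 : ℝ)..t, s ^ 2 / (s + 2 * m) ^ 2)
    (c : ℝ) (hc : c = (12 * m ^ 2) ^ ((4 : ℝ) / 3) / (4 * m ^ 2)) :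
    ∃ C > (0 : ℝ), ∃ t₀ > (0 : ℝ), ∀ t : ℝ, 0 < t → t ≤ t₀ →
      |t ^ 4 / (t + 2 * m) ^ 2 - c * (ρ t) ^ ((4 : ℝ) / 3)| ≤ C * (ρ t) ^ ((5 : ℝ) / 3) := by
  have hm0 : m ≠ 0 := hm.ne'
  have h4m2 : (0:ℝ) < 4*m^2 := by positivity
  refine ⟨((1 + 4*m)/(16*m^4)) * (3*(1+2*m)^2) ^ ((5:ℝ)/3), by positivity, 1, one_pos, ?_⟩
  intro t ht ht1
  have htm : (0:ℝ) < t + 2*m := by linarith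
  -- integrability
  have hint : IntervalIntegrable (fun s => s^2/(s+2*m)^2) volume 0 t := by
    apply ContinuousOn.intervalIntegrable
    apply ContinuousOn.div (by fun_prop) (by fun_prop)
    intro s hs
    rw [Set.uIcc_of_le ht.le] at hs
    have h0 : (0:ℝ) < s + 2*m := by linarith [hs.1]
    positivity
  have hρt := hρ t ht.le
  -- lower bound for ρ
  have hlo : t^3/(3*(t+2*m)^2) ≤ ρ t := by
    rw [hρt]
    have heq : (∫ s in (0:ℝ)..t, s^2/((t+2*m)^2)) = t^3/(3*(t+2*m)^2) := by
      rw [intervalIntegral.integral_div, integral_pow, div_div]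
      norm_num
    rw [← heq]
    apply intervalIntegral.integral_mono_on ht.le ?_ hint
    · intro s hs
      have hs0 : (0:ℝ) ≤ s := hs.1
      have hs1 : s ≤ t := hs.2
      have h0 : (0:ℝ) < s + 2*m := by linarith
      rw [div_le_div_iff₀ (by positivity) (by positivity)]
      nlinarith [mul_nonneg (mul_nonneg (sq_nonneg s) (sub_nonneg.2 hs1))
        (show (0:ℝ) ≤ t + s + 4*m by linarith)]
    · exact ((continuous_pow 2).div_const _).intervalIntegrable 0 t
  -- upper bound for ρ
  have hhi : ρ t ≤ t^3/(12*m^2) := by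
    rw [hρt]
    have heq : (∫ s in (0:ℝ)..t, s^2/(4*m^2)) = t^3/(12*m^2) := by
      rw [intervalIntegral.integral_div, integral_pow, div_div]
      norm_num
      ring_nf
    rw [← heq]
    apply intervalIntegral.integral_mono_on ht.le hint
      (((continuous_pow 2).div_const _).intervalIntegrable 0 t)
    intro s hs
    have hs0 : (0:ℝ) ≤ s := hs.1
    have h0 : (0:ℝ) < s + 2*m := by linarith
    rw [div_le_div_iff₀ (by positivity) (by positivity)]
    nlinarith [mul_nonneg (mul_nonneg (sq_nonneg s) hs0) (show (0:ℝ) ≤ s + 4*m by linarith)]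
  have hρ0 : 0 ≤ ρ t := le_trans (by positivity) hlo
  -- notation
  set b : ℝ := 4*m^2/(t+2*m)^2 with hbdef
  set A : ℝ := t^4/(4*m^2) with hAdef
  have hb_pos : 0 < b := by positivity
  have hb_le : b ≤ 1 := by
    rw [hbdef, div_le_one (by positivity)]
    nlinarith [sq_nonneg t, mul_pos ht hm]
  have hA0 : 0 ≤ A := by positivity
  -- rpow computations
  have hcube4 : ((t:ℝ)^3) ^ ((4:ℝ)/3) = t^4 := by
    rw [← Real.rpow_natCast t 3, ← Real.rpow_mul ht.le, ← Real.rpow_natCast t 4]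
    norm_num
  have hcube5 : ((t:ℝ)^3) ^ ((5:ℝ)/3) = t^5 := by
    rw [← Real.rpow_natCast t 3, ← Real.rpow_mul ht.le, ← Real.rpow_natCast t 5]
    norm_num
  have key : ∀ x : ℝ, 0 ≤ x → c * x ^ ((4:ℝ)/3) = (12*m^2*x) ^ ((4:ℝ)/3) / (4*m^2) := by
    intro x hx
    rw [hc, Real.mul_rpow (by positivity) hx]
    ring
  -- upper: c ρ^{4/3} ≤ A
  have upper : c * (ρ t) ^ ((4:ℝ)/3) ≤ A := by
    rw [key _ hρ0]
    have hmul : 12*m^2*(ρ t) ≤ t^3 := by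
      have h := mul_le_mul_of_nonneg_left hhi (show (0:ℝ) ≤ 12*m^2 by positivity)
      rwa [show 12*m^2*(t^3/(12*m^2)) = t^3 from by field_simp] at h
    have h1 : (12*m^2*(ρ t)) ^ ((4:ℝ)/3) ≤ t^4 := by
      rw [← hcube4]
      exact Real.rpow_le_rpow (by positivity) hmul (by norm_num)
    rw [hAdef]
    exact (div_le_div_iff_of_pos_right h4m2).mpr h1
  -- lower: b^{4/3} A ≤ c ρ^{4/3}
  have lower : b ^ ((4:ℝ)/3) * A ≤ c * (ρ t) ^ ((4:ℝ)/3) := by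
    rw [key _ hρ0]
    have hmul : b * t^3 ≤ 12*m^2*(ρ t) := by
      have h := mul_le_mul_of_nonneg_left hlo (show (0:ℝ) ≤ 12*m^2 by positivity)
      rwa [show 12*m^2*(t^3/(3*(t+2*m)^2)) = b * t^3 from by
        rw [hbdef]; field_simp; ring] at h
    have h1 : b ^ ((4:ℝ)/3) * t^4 ≤ (12*m^2*(ρ t)) ^ ((4:ℝ)/3) := by
      rw [← hcube4, ← Real.mul_rpow hb_pos.le (by positivity)]
      exact Real.rpow_le_rpow (by positivity) hmul (by norm_num)
    have h2 : b ^ ((4:ℝ)/3) * A = (b ^ ((4:ℝ)/3) * t^4)/(4*m^2) := by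
      rw [hAdef]; ring
    rw [h2]
    exact (div_le_div_iff_of_pos_right h4m2).mpr h1
  -- f = b A
  have hfb : t^4/(t+2*m)^2 = b * A := by
    rw [hbdef, hAdef]
    field_simp
  -- b - b^{4/3} ≤ 1 - b
  have hbb : (b - b ^ ((4:ℝ)/3)) * A ≤ (1 - b) * A := by
    have h2 : b ^ (2:ℝ) ≤ b ^ ((4:ℝ)/3) :=
      Real.rpow_le_rpow_of_exponent_ge hb_pos hb_le (by norm_num)
    have h2' : b ^ (2:ℝ) = b ^ 2 := by
      rw [← Real.rpow_natCast b 2]; norm_num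
    rw [h2'] at h2
    have h3 : b - b ^ ((4:ℝ)/3) ≤ 1 - b := by nlinarith [sq_nonneg (1-b)]
    exact mul_le_mul_of_nonneg_right h3 hA0
  -- main absolute value bound
  have habs : |t ^ 4 / (t + 2 * m) ^ 2 - c * (ρ t) ^ ((4:ℝ)/3)| ≤ (1-b) * A := by
    rw [hfb, abs_le]
    constructor
    · nlinarith [upper, mul_le_mul_of_nonneg_right hb_le hA0]
    · nlinarith [lower, hbb]
  -- (1-b) A ≤ C₁ t^5
  have h1b : 1 - b ≤ t*(1+4*m)/(4*m^2) := by
    have h1 : 1 - b = t*(t+4*m)/(t+2*m)^2 := by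
      rw [hbdef]; field_simp; ring
    rw [h1]
    gcongr <;> nlinarith
  have step1 : (1-b) * A ≤ (1 + 4*m)/(16*m^4) * t^5 := by
    calc (1-b) * A ≤ (t*(1+4*m)/(4*m^2)) * A := mul_le_mul_of_nonneg_right h1b hA0
      _ = (1 + 4*m)/(16*m^4) * t^5 := by rw [hAdef]; field_simp; ring
  -- t^5 ≤ D ρ^{5/3}
  have hlo2 : t^3/(3*(1+2*m)^2) ≤ ρ t := by
    refine le_trans ?_ hlo
    gcongr <;> nlinarith
  have ht5 : t^5 ≤ (3*(1+2*m)^2) ^ ((5:ℝ)/3) * (ρ t) ^ ((5:ℝ)/3) := by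
    have h := Real.rpow_le_rpow (by positivity) hlo2 (by norm_num : (0:ℝ) ≤ 5/3)
    rw [Real.div_rpow (by positivity) (by positivity), hcube5] at h
    rw [div_le_iff₀ (by positivity)] at h
    linarith [h]
  calc |t ^ 4 / (t + 2 * m) ^ 2 - c * (ρ t) ^ ((4:ℝ)/3)|
      ≤ (1-b) * A := habs
    _ ≤ (1 + 4*m)/(16*m^4) * t^5 := step1
    _ ≤ (1 + 4*m)/(16*m^4) * ((3*(1+2*m)^2) ^ ((5:ℝ)/3) * (ρ t) ^ ((5:ℝ)/3)) :=
        mul_le_mul_of_nonneg_left ht5 (by positivity)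
    _ = (1 + 4*m)/(16*m^4) * (3*(1+2*m)^2) ^ ((5:ℝ)/3) * (ρ t) ^ ((5:ℝ)/3) := by ring
end

section
/- Let n ≥ 3 be an integer, α > 0, β > 0, and define φ(r) = α r^{β} and S(r) = (n−1)[−2φ″(r)/φ(r) + (n−2)(1−φ′(r)²)/φ(r)²] for r > 0. Then: (i) if β = 1 and 0 < α < 1, then S(r) = (n−1)(n−2)(1−α²)/(α²r²) > 0 for all r > 0; (ii) if 0 < β ≤ 2/n (and α > 0 arbitrary), then S(r) > 0 for all r > 0. -/
lemma d1_aux (α β : ℝ) (φ : ℝ → ℝ) (hφ : ∀ r : ℝ, 0 < r → φ r = α * r ^ β) :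
    ∀ r : ℝ, 0 < r → deriv φ r = α * (β * r ^ (β - 1)) := by
  intro r hr
  have hev : φ =ᶠ[nhds r] fun x => α * x ^ β :=
    Filter.eventuallyEq_of_mem (Ioi_mem_nhds hr) (fun x hx => hφ x hx)
  rw [hev.deriv_eq]
  exact ((Real.hasDerivAt_rpow_const (p := β) (Or.inl hr.ne')).const_mul α).deriv

lemma d2_aux (α β : ℝ) (φ : ℝ → ℝ) (hφ : ∀ r : ℝ, 0 < r → φ r = α * r ^ β) :
    ∀ r : ℝ, 0 < r → deriv (deriv φ) r = α * β * ((β - 1) * r ^ (β - 2)) := by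
  intro r hr
  have hev : deriv φ =ᶠ[nhds r] fun x => α * β * x ^ (β - 1) :=
    Filter.eventuallyEq_of_mem (Ioi_mem_nhds hr)
      (fun x hx => by rw [d1_aux α β φ hφ x hx]; ring)
  rw [hev.deriv_eq]
  have h2 : β - 1 - 1 = β - 2 := by ring
  have := ((Real.hasDerivAt_rpow_const (p := β - 1) (x := r) (Or.inl hr.ne')).const_mul (α * β)).deriv
  rw [this, h2]

/-- Lemma 2.1, positivity: for `n ≥ 3`, `α, β > 0`, `φ(r) = α r^β` and
`S(r) = (n−1)[−2φ″/φ + (n−2)(1−(φ′)²)/φ²]` (the scalar curvature of the warped product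
`dr² + φ² h₀`), one has:
(i) if `β = 1` and `α < 1` then `S(r) = (n−1)(n−2)(1−α²)/(α²r²) > 0` for all `r > 0`;
(ii) if `0 < β ≤ 2/n` then `S(r) > 0` for all `r > 0`. -/
theorem stmt_8 (n : ℕ) (hn : 3 ≤ n) (α β : ℝ) (hα : 0 < α) (hβ : 0 < β)
    (φ S : ℝ → ℝ)
    (hφ : ∀ r : ℝ, 0 < r → φ r = α * r ^ β)
    (hS : ∀ r : ℝ, 0 < r → S r =
      ((n : ℝ) - 1) * (-(2 * deriv (deriv φ) r / φ r)
        + ((n : ℝ) - 2) * (1 - (deriv φ r) ^ 2) / (φ r) ^ 2)) :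
    ((β = 1 → α < 1 → ∀ r : ℝ, 0 < r →
        S r = ((n : ℝ) - 1) * ((n : ℝ) - 2) * (1 - α ^ 2) / (α ^ 2 * r ^ 2) ∧ 0 < S r) ∧
      (β ≤ 2 / (n : ℝ) → ∀ r : ℝ, 0 < r → 0 < S r)) := by
  have hn3 : (3 : ℝ) ≤ (n : ℝ) := by exact_mod_cast hn
  have key : ∀ r : ℝ, 0 < r →
      S r = ((n : ℝ) - 1) * (β * (2 - (n : ℝ) * β) / r ^ 2
        + ((n : ℝ) - 2) / (α ^ 2 * (r ^ (β - 1)) ^ 2 * r ^ 2)) := by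
    intro r hr
    have hB : r ^ (β - 1) * r = r ^ β := by
      rw [← Real.rpow_add_one hr.ne' (β - 1)]; norm_num
    have hC : r ^ (β - 2) * r = r ^ (β - 1) := by
      rw [← Real.rpow_add_one hr.ne' (β - 2)]; congr 1; ring
    have hCpos : 0 < r ^ (β - 2) := Real.rpow_pos_of_pos hr _
    rw [hS r hr, hφ r hr, d1_aux α β φ hφ r hr, d2_aux α β φ hφ r hr,
      ← hB, ← hC]
    field_simp
    ring
  constructor
  · intro hβ1 hα1 r hr
    have h0 : r ^ (β - 1) = 1 := by rw [hβ1]; simp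
    have heq : S r = ((n : ℝ) - 1) * ((n : ℝ) - 2) * (1 - α ^ 2) / (α ^ 2 * r ^ 2) := by
      rw [key r hr, h0, hβ1]
      field_simp
      ring
    refine ⟨heq, ?_⟩
    rw [heq]
    apply div_pos
    · have h1 : α ^ 2 < 1 := by nlinarith
      exact mul_pos (mul_pos (by linarith) (by linarith)) (by linarith)
    · positivity
  · intro hβ2 r hr
    rw [key r hr]
    apply mul_pos (by linarith)
    apply add_pos_of_nonneg_of_pos
    · apply div_nonneg _ (by positivity)
      have hnpos : (0 : ℝ) < (n : ℝ) := by linarith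
      have : β * (n : ℝ) ≤ 2 := by
        rw [div_eq_mul_inv] at hβ2
        calc β * (n : ℝ) ≤ (2 * ((n:ℝ))⁻¹) * (n:ℝ) := by nlinarith [inv_pos.mpr hnpos]
          _ = 2 := by field_simp
      nlinarith
    · have hBpos : 0 < r ^ (β - 1) := Real.rpow_pos_of_pos hr _
      exact div_pos (by linarith) (by positivity)
end

section
/- Let 0 < δ < 1, C > 0 and T > 0. Suppose F : (0, T] → [0, ∞) is differentiable, lim_{t→0⁺} F(t) = 0, and F′(t) ≤ C( t^{−(1+δ)/2} + t^{−δ} + 2 t^{−(1+δ)/2} F(t) ) for all t ∈ (0, T]. Then, with c = 4C/(1−δ), one has e^{−c t^{(1−δ)/2}} F(t) ≤ (C/(1−δ)) ( 2 t^{(1−δ)/2} + t^{1−δ} ) for all t ∈ (0, T]; in particular F(t) → 0 as t → 0⁺ at rate O(t^{(1−δ)/2}). -/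
open Filter Set Topology

/-!
With `Φ(t) = c t^{(1-δ)/2}` we have `Φ' = 2C t^{-(1+δ)/2}`, so the inequality reads
`F' ≤ Φ' F + q` with `q = C (t^{-(1+δ)/2} + t^{-δ}) ≥ 0`. The integrating factor `e^{-Φ} ≤ 1`
gives `(e^{-Φ} F)' ≤ q = K'` for `K(t) = (C/(1-δ)) (2 t^{(1-δ)/2} + t^{1-δ})`, so `e^{-Φ} F - K`
is antitone on `(0, T]`; it tends to `0` at `0⁺`, hence it is nonpositive.
-/

theorem AntitoneOn.le_of_tendsto_nhdsGT {G : ℝ → ℝ} {a b L : ℝ} (hG : AntitoneOn G (Ioc a b))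
    (hlim : Tendsto G (𝓝[>] a) (𝓝 L)) {t : ℝ} (ht : t ∈ Ioc a b) : G t ≤ L := by
  refine ge_of_tendsto hlim ?_
  filter_upwards [Ioc_mem_nhdsGT ht.1] with s hs
  exact hG ⟨hs.1, hs.2.trans ht.2⟩ ht hs.2

theorem le_of_hasDerivAt_nonpos_of_tendsto_nhdsGT {G G' : ℝ → ℝ} {a b L : ℝ}
    (hG : ∀ t ∈ Ioc a b, HasDerivAt G (G' t) t) (hG' : ∀ t ∈ Ioo a b, G' t ≤ 0)
    (hlim : Tendsto G (𝓝[>] a) (𝓝 L)) {t : ℝ} (ht : t ∈ Ioc a b) : G t ≤ L := by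
  have hanti : AntitoneOn G (Ioc a b) := by
    refine antitoneOn_of_deriv_nonpos (convex_Ioc a b)
      (fun x hx ↦ (hG x hx).continuousAt.continuousWithinAt) ?_ ?_
    · rw [interior_Ioc]
      exact fun x hx ↦ (hG x (Ioo_subset_Ioc_self hx)).differentiableAt.differentiableWithinAt
    · rw [interior_Ioc]
      exact fun x hx ↦ (hG x (Ioo_subset_Ioc_self hx)).deriv ▸ hG' x hx
  exact hanti.le_of_tendsto_nhdsGT hlim ht

theorem exp_neg_mul_le_of_deriv_le {F f Φ φ K q : ℝ → ℝ} {a b l : ℝ}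
    (hF : ∀ t ∈ Ioc a b, HasDerivAt F (f t) t) (hΦ : ∀ t ∈ Ioc a b, HasDerivAt Φ (φ t) t)
    (hK : ∀ t ∈ Ioc a b, HasDerivAt K (q t) t) (hΦ0 : ∀ t ∈ Ioo a b, 0 ≤ Φ t)
    (hq : ∀ t ∈ Ioo a b, 0 ≤ q t) (hf : ∀ t ∈ Ioo a b, f t ≤ φ t * F t + q t)
    (hFlim : Tendsto F (𝓝[>] a) (𝓝 0)) (hΦlim : Tendsto Φ (𝓝[>] a) (𝓝 l))
    (hKlim : Tendsto K (𝓝[>] a) (𝓝 0)) {t : ℝ} (ht : t ∈ Ioc a b) :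
    Real.exp (-Φ t) * F t ≤ K t := by
  have hG : ∀ s ∈ Ioc a b, HasDerivAt (fun s ↦ Real.exp (-Φ s) * F s - K s)
      (Real.exp (-Φ s) * (f s - φ s * F s) - q s) s := fun s hs ↦
    (((hΦ s hs).neg.exp.mul (hF s hs)).sub (hK s hs)).congr_deriv (by rw [Pi.neg_apply]; ring)
  have hG' : ∀ s ∈ Ioo a b, Real.exp (-Φ s) * (f s - φ s * F s) - q s ≤ 0 := by
    intro s hs
    have hE : Real.exp (-Φ s) ≤ 1 := Real.exp_le_one_iff.2 (neg_nonpos.2 (hΦ0 s hs))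
    calc Real.exp (-Φ s) * (f s - φ s * F s) - q s
        ≤ Real.exp (-Φ s) * q s - q s := by
          gcongr
          linarith [hf s hs]
      _ ≤ 0 := by nlinarith [hq s hs]
  have hlim : Tendsto (fun s ↦ Real.exp (-Φ s) * F s - K s) (𝓝[>] a) (𝓝 0) := by
    simpa using (hΦlim.neg.rexp.mul hFlim).sub hKlim
  linarith [le_of_hasDerivAt_nonpos_of_tendsto_nhdsGT hG hG' hlim ht]

theorem tendsto_rpow_nhdsGT_zero_of_pos {p : ℝ} (hp : 0 < p) :
    Tendsto (fun x : ℝ ↦ x ^ p) (𝓝[>] 0) (𝓝 0) :=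
  ((Real.continuous_rpow_const hp.le).tendsto' 0 0 (Real.zero_rpow hp.ne')).mono_left
    nhdsWithin_le_nhds

theorem stmt_12_general (δ C T : ℝ) (hδ1 : δ < 1) (hC : 0 < C)
    (F : ℝ → ℝ)
    (hdiff : ∀ t ∈ Set.Ioc (0 : ℝ) T, DifferentiableAt ℝ F t)
    (hlim : Tendsto F (nhdsWithin 0 (Set.Ioi 0)) (nhds 0))
    (hF' : ∀ t ∈ Set.Ioc (0 : ℝ) T,
      deriv F t ≤ C * (t ^ (-(1 + δ) / 2) + t ^ (-δ) + 2 * t ^ (-(1 + δ) / 2) * F t)) :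
    ∀ t ∈ Set.Ioc (0 : ℝ) T,
      Real.exp (-(4 * C / (1 - δ) * t ^ ((1 - δ) / 2))) * F t ≤
        C / (1 - δ) * (2 * t ^ ((1 - δ) / 2) + t ^ (1 - δ)) := by
  have hδ : 0 < 1 - δ := by linarith
  have ha : 0 < (1 - δ) / 2 := by positivity
  have hpow : ∀ {p t : ℝ}, 0 < t → HasDerivAt (fun x : ℝ ↦ x ^ p) (p * t ^ (p - 1)) t :=
    fun ht ↦ Real.hasDerivAt_rpow_const (Or.inl ht.ne')
  intro t ht
  refine exp_neg_mul_le_of_deriv_le (f := deriv F) (l := 0)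
    (Φ := fun t ↦ 4 * C / (1 - δ) * t ^ ((1 - δ) / 2))
    (K := fun t ↦ C / (1 - δ) * (2 * t ^ ((1 - δ) / 2) + t ^ (1 - δ)))
    (φ := fun t ↦ 2 * C * t ^ (-(1 + δ) / 2)) (q := fun t ↦ C * (t ^ (-(1 + δ) / 2) + t ^ (-δ)))
    (fun s hs ↦ (hdiff s hs).hasDerivAt) (fun s hs ↦ ?_) (fun s hs ↦ ?_)
    (fun s hs ↦ by have := hs.1; positivity) (fun s hs ↦ by have := hs.1; positivity)
    (fun s hs ↦ by linarith [hF' s (Ioo_subset_Ioc_self hs)]) hlim ?_ ?_ ht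
  · refine ((hpow hs.1).const_mul _).congr_deriv ?_
    rw [show (1 - δ) / 2 - 1 = -(1 + δ) / 2 by ring]
    field_simp
    ring
  · refine (((hpow hs.1).const_mul 2).add (hpow hs.1)).const_mul _ |>.congr_deriv ?_
    rw [show (1 - δ) / 2 - 1 = -(1 + δ) / 2 by ring, show 1 - δ - 1 = -δ by ring]
    field_simp
  · simpa using (tendsto_rpow_nhdsGT_zero_of_pos ha).const_mul (4 * C / (1 - δ))
  · simpa using (((tendsto_rpow_nhdsGT_zero_of_pos ha).const_mul 2).add
      (tendsto_rpow_nhdsGT_zero_of_pos hδ)).const_mul (C / (1 - δ))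

/-- differential inequality step of Lemma 4.4: if `F ≥ 0` is differentiable
on `(0,T]` with `F(t) → 0` as `t → 0⁺` and
`F′(t) ≤ C(t^{−(1+δ)/2} + t^{−δ} + 2 t^{−(1+δ)/2} F(t))`, then with `c = 4C/(1−δ)`,
`e^{−c t^{(1−δ)/2}} F(t) ≤ (C/(1−δ))(2 t^{(1−δ)/2} + t^{1−δ})` on `(0,T]`. -/
theorem stmt_12 (δ C T : ℝ) (hδ0 : 0 < δ) (hδ1 : δ < 1) (hC : 0 < C) (hT : 0 < T)
    (F : ℝ → ℝ)
    (hF0 : ∀ t ∈ Set.Ioc (0 : ℝ) T, 0 ≤ F t)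
    (hdiff : ∀ t ∈ Set.Ioc (0 : ℝ) T, DifferentiableAt ℝ F t)
    (hlim : Tendsto F (nhdsWithin 0 (Set.Ioi 0)) (nhds 0))
    (hF' : ∀ t ∈ Set.Ioc (0 : ℝ) T,
      deriv F t ≤ C * (t ^ (-(1 + δ) / 2) + t ^ (-δ) + 2 * t ^ (-(1 + δ) / 2) * F t)) :
    ∀ t ∈ Set.Ioc (0 : ℝ) T,
      Real.exp (-(4 * C / (1 - δ) * t ^ ((1 - δ) / 2))) * F t ≤
        C / (1 - δ) * (2 * t ^ ((1 - δ) / 2) + t ^ (1 - δ)) :=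
  stmt_12_general δ C T hδ1 hC F hdiff hlim hF'
end

section
/- With the setup below, for every p ∈ [1, ∞) and every u ∈ L^p(ℝⁿ), the function v(x) = ∫_{ℝⁿ} u(x − λρ(x)y) φ(y) dy is defined for almost every x and satisfies ‖v‖_{L^p(ℝⁿ)} ≤ 2^{1/p} ‖u‖_{L^p(ℝⁿ)}. -/
/-!
For fixed `y` with `‖y‖ ≤ 1`, the map `x ↦ x - λρ(x) y` differs from the identity by a
`1/2`-Lipschitz map, so it is injective, and its Jacobian determinant `1 - λ⟨∇ρ(x), y⟩` is at
least `1/2`; by the change of variables formula it pushes Lebesgue measure forward to at most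
twice Lebesgue measure. Integrating in `y` against the probability measure `φ(y) dy`, the map
`Ψ(x, y) = x - λρ(x) y` pushes `dx ⊗ φ(y) dy` forward to at most `2 dx`, so
`‖u ∘ Ψ‖_p ≤ 2^{1/p} ‖u‖_p`. Finally `v` is the fibrewise average of `u ∘ Ψ` against a
probability measure, and by Jensen's inequality fibrewise averaging does not increase the
`Lᵖ` norm.
-/

open MeasureTheory ENNReal

theorem LinearMap.det_one_sub_smulRight {R M : Type*} [CommRing R] [AddCommGroup M] [Module R M]
    [Module.Free R M] [Module.Finite R M] (f : M →ₗ[R] R) (v : M) :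
    LinearMap.det (1 - f.smulRight v) = 1 - f v := by
  classical
  let b := Module.Free.chooseBasis R M
  have hmat : LinearMap.toMatrix b b (f.smulRight v) =
      Matrix.replicateCol Unit (b.repr v) * Matrix.replicateRow Unit (fun j => f (b j)) := by
    ext i j
    simp [LinearMap.toMatrix_apply, Matrix.mul_apply, mul_comm]
  have hf : f v = ∑ j, f (b j) * b.repr v j := by
    conv_lhs => rw [← b.sum_repr v]
    simp only [map_sum, map_smul, smul_eq_mul, mul_comm]
  rw [← LinearMap.det_toMatrix b, map_sub, LinearMap.toMatrix_one, hmat,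
    Matrix.det_one_sub_mul_comm, Matrix.det_unique, hf]
  simp [Matrix.mul_apply]

namespace MeasureTheory

section Jacobian

variable {E : Type*} [NormedAddCommGroup E] [NormedSpace ℝ E] [FiniteDimensional ℝ E]
  [MeasurableSpace E] [BorelSpace E] (μ : Measure E) [μ.IsAddHaarMeasure]

theorem Measure.map_le_smul_of_le_abs_det_fderiv {Φ : E → E}
    {Φ' : E → E →L[ℝ] E} (hΦ : ∀ x, HasFDerivAt Φ (Φ' x) x) (hinj : Function.Injective Φ)
    {c : ℝ} (hc : 0 < c) (hdet : ∀ x, c ≤ |(Φ' x).det|) :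
    μ.map Φ ≤ (ENNReal.ofReal c)⁻¹ • μ := by
  have hmeas : Measurable Φ :=
    (continuous_iff_continuousAt.2 fun x => (hΦ x).continuousAt).measurable
  refine Measure.le_iff.2 fun s hs => ?_
  rw [Measure.map_apply hmeas hs, Measure.smul_apply, smul_eq_mul,
    ← mul_le_iff_le_inv (ofReal_pos.2 hc).ne' ofReal_ne_top, ← setLIntegral_const]
  calc ∫⁻ _ in Φ ⁻¹' s, ENNReal.ofReal c ∂μ
      ≤ ∫⁻ x in Φ ⁻¹' s, ENNReal.ofReal |(Φ' x).det| ∂μ :=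
        lintegral_mono fun x => ofReal_le_ofReal (hdet x)
    _ = μ (Φ '' (Φ ⁻¹' s)) := lintegral_abs_det_fderiv_eq_addHaar_image μ (hmeas hs)
        (fun x _ => (hΦ x).hasFDerivWithinAt) hinj.injOn
    _ ≤ μ s := measure_mono (Set.image_preimage_subset Φ s)

theorem Measure.map_id_sub_smul_le {σ : E → ℝ} (hσ : Differentiable ℝ σ) {y : E} {K : ℝ}
    (hK : ∀ x, ‖fderiv ℝ σ x‖ * ‖y‖ ≤ K) (hK1 : K < 1) :
    μ.map (fun x => x - σ x • y) ≤ (ENNReal.ofReal (1 - K))⁻¹ • μ := by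
  have hσy : ∀ x, HasFDerivAt (fun x => σ x • y) ((fderiv ℝ σ x).smulRight y) x :=
    fun x => (hσ x).hasFDerivAt.smul_const y
  have hlip : ∀ x x', ‖σ x • y - σ x' • y‖ ≤ K * ‖x - x'‖ := fun x x' =>
    convex_univ.norm_image_sub_le_of_norm_hasFDerivWithin_le
      (fun z _ => (hσy z).hasFDerivWithinAt)
      (fun z _ => ((fderiv ℝ σ z).norm_smulRight_apply y).trans_le (hK z))
      (Set.mem_univ x') (Set.mem_univ x)
  have hinj : Function.Injective fun x => x - σ x • y := by
    intro x x' h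
    have hxx' : ‖x - x'‖ ≤ K * ‖x - x'‖ :=
      calc ‖x - x'‖ = ‖σ x • y - σ x' • y‖ := by rw [sub_eq_sub_iff_sub_eq_sub.1 h]
        _ ≤ K * ‖x - x'‖ := hlip x x'
    have : ‖x - x'‖ = 0 := by nlinarith [norm_nonneg (x - x')]
    exact sub_eq_zero.1 (norm_eq_zero.1 this)
  refine Measure.map_le_smul_of_le_abs_det_fderiv μ
    (fun x => (hasFDerivAt_id x).sub (hσy x)) hinj (by linarith) fun x => ?_
  have happly : |fderiv ℝ σ x y| ≤ K :=
    ((fderiv ℝ σ x).le_opNorm y).trans (hK x)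
  rw [ContinuousLinearMap.det, ContinuousLinearMap.toLinearMap_sub, ContinuousLinearMap.coe_id,
    ← Module.End.one_eq_id, ContinuousLinearMap.coe_smulRight, LinearMap.det_one_sub_smulRight]
  exact (by linarith [(abs_le.1 happly).2] : 1 - K ≤ 1 - fderiv ℝ σ x y).trans (le_abs_self _)

end Jacobian

theorem Measure.map_prod_le_smul {α β γ : Type*} [MeasurableSpace α] [MeasurableSpace β]
    [MeasurableSpace γ] {μ : Measure α} {ν : Measure β} [SFinite μ] [SFinite ν]
    {μ' : Measure γ} {Ψ : α × β → γ} (hΨ : Measurable Ψ) {C : ℝ≥0∞}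
    (h : ∀ᵐ y ∂ν, μ.map (fun x => Ψ (x, y)) ≤ C • μ') :
    (μ.prod ν).map Ψ ≤ (C * ν Set.univ) • μ' := by
  refine Measure.le_iff.2 fun s hs => ?_
  rw [Measure.map_apply hΨ hs, Measure.prod_apply_symm (hΨ hs), Measure.smul_apply, smul_eq_mul,
    mul_right_comm, ← lintegral_const]
  refine lintegral_mono_ae ?_
  filter_upwards [h] with y hy
  have hslice : Measurable fun x => Ψ (x, y) := hΨ.comp measurable_prodMk_right
  exact (Measure.map_apply hslice hs).symm.trans_le (hy s)

section Comp

variable {α β E : Type*} [MeasurableSpace α] [MeasurableSpace β] {μ : Measure α} {ν : Measure β}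
  [NormedAddCommGroup E] {p : ℝ≥0∞} {Ψ : α → β} {C : ℝ≥0∞} {u : β → E}

theorem eLpNorm_comp_le_of_map_le (hΨ : AEMeasurable Ψ μ) (hp : p ≠ ∞) (hmap : μ.map Ψ ≤ C • ν)
    (hu : AEStronglyMeasurable u ν) :
    eLpNorm (u ∘ Ψ) p μ ≤ C ^ (1 / p).toReal * eLpNorm u p ν := by
  rw [← eLpNorm_map_measure (hu.mono_ac (Measure.absolutelyContinuous_of_le_smul hmap)) hΨ,
    ← smul_eq_mul, ← eLpNorm_smul_measure_of_ne_top hp]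
  exact eLpNorm_mono_measure u hmap

theorem MemLp.comp_of_map_le (hΨ : AEMeasurable Ψ μ) (hp : p ≠ ∞) (hC : C ≠ ∞)
    (hmap : μ.map Ψ ≤ C • ν) (hu : MemLp u p ν) : MemLp (u ∘ Ψ) p μ :=
  ⟨(hu.1.mono_ac (Measure.absolutelyContinuous_of_le_smul hmap)).comp_aemeasurable hΨ,
    (eLpNorm_comp_le_of_map_le hΨ hp hmap hu.1).trans_lt
      (mul_lt_top (rpow_lt_top_of_nonneg toReal_nonneg hC) hu.2)⟩

end Comp

section Fibre

variable {α β E : Type*} [MeasurableSpace α] [MeasurableSpace β] {μ : Measure α} {ν : Measure β}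
  [NormedAddCommGroup E] {p : ℝ≥0∞} {f : α × β → E}

theorem eLpNorm_prod_eq_eLpNorm_eLpNorm_prodMk_left [SFinite ν] (hp0 : p ≠ 0) (hp : p ≠ ∞)
    (hf : AEStronglyMeasurable f (μ.prod ν)) :
    eLpNorm f p (μ.prod ν) = eLpNorm (fun x => eLpNorm (fun y => f (x, y)) p ν) p μ := by
  have hp_pos : 0 < p.toReal := toReal_pos hp0 hp
  simp only [eLpNorm_eq_lintegral_rpow_enorm_toReal hp0 hp, enorm_eq_self]
  rw [lintegral_prod _ (hf.enorm.pow_const _)]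
  congr 1
  refine lintegral_congr fun x => ?_
  rw [← rpow_mul, one_div_mul_cancel hp_pos.ne', rpow_one]

theorem MemLp.ae_integrable_prodMk_left [IsProbabilityMeasure ν] (hp1 : 1 ≤ p) (hp : p ≠ ∞)
    (hf : MemLp f p (μ.prod ν)) :
    ∀ᵐ x ∂μ, Integrable (fun y => f (x, y)) ν := by
  have hp0 : p ≠ 0 := (one_pos.trans_le hp1).ne'
  have hpow := hf.1.enorm.pow_const p.toReal
  have hfin : ∫⁻ x, ∫⁻ y, ‖f (x, y)‖ₑ ^ p.toReal ∂ν ∂μ ≠ ∞ := by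
    rw [← lintegral_prod _ hpow]
    exact (lintegral_rpow_enorm_lt_top_of_eLpNorm_lt_top hp0 hp hf.2).ne
  filter_upwards [hf.1.prodMk_left, ae_lt_top' hpow.lintegral_prod_right' hfin] with x hmeas hlt
  exact MemLp.integrable hp1
    ⟨hmeas, (eLpNorm_lt_top_iff_lintegral_rpow_enorm_lt_top hp0 hp).2 hlt⟩

theorem MemLp.eLpNorm_integral_prod_left_le [NormedSpace ℝ E] [IsProbabilityMeasure ν]
    (hp1 : 1 ≤ p) (hp : p ≠ ∞) (hf : MemLp f p (μ.prod ν)) :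
    eLpNorm (fun x => ∫ y, f (x, y) ∂ν) p μ ≤ eLpNorm f p (μ.prod ν) := by
  rw [eLpNorm_prod_eq_eLpNorm_eLpNorm_prodMk_left (one_pos.trans_le hp1).ne' hp hf.1]
  refine eLpNorm_mono_enorm_ae ?_
  filter_upwards [hf.1.prodMk_left] with x hx
  calc ‖∫ y, f (x, y) ∂ν‖ₑ ≤ eLpNorm (fun y => f (x, y)) 1 ν := by
        rw [eLpNorm_one_eq_lintegral_enorm]; exact enorm_integral_le_lintegral_enorm _
    _ ≤ _ := eLpNorm_le_eLpNorm_of_exponent_le hp1 hx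
    _ = _ := (enorm_eq_self _).symm

end Fibre

section WithDensity

variable {α E : Type*} [MeasurableSpace α] {μ : Measure α} {φ : α → ℝ}

theorem isProbabilityMeasure_withDensity_ofReal (hφ0 : 0 ≤ᵐ[μ] φ) (hφ : ∫ a, φ a ∂μ = 1) :
    IsProbabilityMeasure (μ.withDensity fun a => ENNReal.ofReal (φ a)) := by
  have hφi : Integrable φ μ := .of_integral_ne_zero (by rw [hφ]; exact one_ne_zero)
  constructor
  rw [withDensity_apply _ MeasurableSet.univ, Measure.restrict_univ,
    ← ofReal_integral_eq_lintegral_ofReal hφi hφ0, hφ, ofReal_one]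

theorem ae_withDensity_ofReal_mem {s : Set α} (hφ : AEMeasurable φ μ)
    (hs : Function.support φ ⊆ s) :
    ∀ᵐ a ∂μ.withDensity (fun a => ENNReal.ofReal (φ a)), a ∈ s := by
  refine (ae_withDensity_iff' hφ.ennreal_ofReal).2 (.of_forall fun a ha => hs fun h => ?_)
  exact ha (by rw [h, ofReal_zero])

variable [NormedAddCommGroup E] [NormedSpace ℝ E]

theorem integral_withDensity_ofReal (hφ : AEMeasurable φ μ) (hφ0 : ∀ a, 0 ≤ φ a) (g : α → E) :
    ∫ a, g a ∂μ.withDensity (fun a => ENNReal.ofReal (φ a)) = ∫ a, φ a • g a ∂μ := by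
  rw [integral_withDensity_eq_integral_toReal_smul₀ hφ.ennreal_ofReal
    (.of_forall fun _ => ofReal_lt_top)]
  simp only [toReal_ofReal (hφ0 _)]

theorem integrable_withDensity_ofReal_iff (hφ : AEMeasurable φ μ) (hφ0 : ∀ a, 0 ≤ φ a)
    {g : α → E} :
    Integrable g (μ.withDensity fun a => ENNReal.ofReal (φ a)) ↔
      Integrable (fun a => φ a • g a) μ := by
  rw [integrable_withDensity_iff_integrable_smul₀' hφ.ennreal_ofReal
    (.of_forall fun _ => ofReal_lt_top)]
  simp only [toReal_ofReal (hφ0 _)]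

end WithDensity

end MeasureTheory

open InnerProductSpace in
theorem map_sub_mul_smul_le {E : Type*} [NormedAddCommGroup E] [InnerProductSpace ℝ E]
    [FiniteDimensional ℝ E] [MeasurableSpace E] [BorelSpace E] (μ : Measure E)
    [μ.IsAddHaarMeasure] {ρ : E → ℝ} (hρ : Differentiable ℝ ρ) {C₀ lam : ℝ}
    (hgrad : ∀ x, ‖gradient ρ x‖ ≤ C₀) (hlam : 0 < lam) (hlamC : lam * C₀ ≤ 1 / 2) {y : E}
    (hy : ‖y‖ ≤ 1) :
    μ.map (fun x => x - (lam * ρ x) • y) ≤ (2 : ℝ≥0∞) • μ := by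
  have hC₀ : 0 ≤ C₀ := (norm_nonneg _).trans (hgrad 0)
  have hfderiv : ∀ x, ‖fderiv ℝ (fun x => lam * ρ x) x‖ * ‖y‖ ≤ 1 / 2 := fun x => by
    rw [fderiv_const_mul (hρ x), norm_smul, Real.norm_of_nonneg hlam.le, ← toDual_gradient,
      LinearIsometryEquiv.norm_map]
    calc lam * ‖gradient ρ x‖ * ‖y‖ ≤ lam * C₀ * 1 :=
          mul_le_mul (by gcongr; exact hgrad x) hy (norm_nonneg _) (mul_nonneg hlam.le hC₀)
      _ ≤ 1 / 2 := by linarith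
  have h := Measure.map_id_sub_smul_le μ (hρ.const_mul lam) hfderiv (by norm_num)
  have htwo : (ENNReal.ofReal (1 - 1 / 2))⁻¹ = 2 := by
    rw [show (1 : ℝ) - 1 / 2 = 2⁻¹ by norm_num, ofReal_inv_of_pos two_pos, ofReal_ofNat, inv_inv]
  rwa [htwo] at h

theorem map_prod_sub_mul_smul_le {E : Type*} [NormedAddCommGroup E] [InnerProductSpace ℝ E]
    [FiniteDimensional ℝ E] [MeasurableSpace E] [BorelSpace E] (μ : Measure E)
    [μ.IsAddHaarMeasure] (ν : Measure E) [IsProbabilityMeasure ν] (hν : ∀ᵐ y ∂ν, ‖y‖ ≤ 1)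
    {ρ : E → ℝ} (hρ : Differentiable ℝ ρ) {C₀ lam : ℝ} (hgrad : ∀ x, ‖gradient ρ x‖ ≤ C₀)
    (hlam : 0 < lam) (hlamC : lam * C₀ ≤ 1 / 2) :
    (μ.prod ν).map (fun q => q.1 - (lam * ρ q.1) • q.2) ≤ (2 : ℝ≥0∞) • μ := by
  have hρc := hρ.continuous
  have h := Measure.map_prod_le_smul (Ψ := fun q : E × E => q.1 - (lam * ρ q.1) • q.2)
    (by fun_prop) (hν.mono fun y hy => map_sub_mul_smul_le μ hρ hgrad hlam hlamC hy)
  rwa [measure_univ, mul_one] at h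

theorem stmt_15_general (n : ℕ) (C₀ lam : ℝ)
    (ρ : EuclideanSpace ℝ (Fin n) → ℝ)
    (hρ : ContDiff ℝ 1 ρ)
    (hgrad : ∀ x, ‖gradient ρ x‖ ≤ C₀)
    (hlam : 0 < lam) (hlamC : lam * C₀ ≤ 1 / 2)
    (φ : EuclideanSpace ℝ (Fin n) → ℝ)
    (hφ0 : ∀ y, 0 ≤ φ y)
    (hφsupp : Function.support φ ⊆ Metric.closedBall 0 1)
    (hφint : ∫ y, φ y = 1)
    (p : ℝ) (hp : 1 ≤ p)
    (u : EuclideanSpace ℝ (Fin n) → ℝ)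
    (hu : MemLp u (ENNReal.ofReal p) volume)
    (v : EuclideanSpace ℝ (Fin n) → ℝ)
    (hv : ∀ x, v x = ∫ y, u (x - (lam * ρ x) • y) * φ y) :
    (∀ᵐ x : EuclideanSpace ℝ (Fin n),
        Integrable (fun y => u (x - (lam * ρ x) • y) * φ y)) ∧
      eLpNorm v (ENNReal.ofReal p) volume ≤
        ENNReal.ofReal ((2 : ℝ) ^ (1 / p)) * eLpNorm u (ENNReal.ofReal p) volume := by
  set ν := volume.withDensity fun y => ENNReal.ofReal (φ y)
  have hφm : AEMeasurable φ := (Integrable.of_integral_ne_zero (by simp [hφint])).aemeasurable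
  have hν : IsProbabilityMeasure ν := isProbabilityMeasure_withDensity_ofReal (.of_forall hφ0) hφint
  have hball : ∀ᵐ y ∂ν, ‖y‖ ≤ 1 :=
    (ae_withDensity_ofReal_mem hφm hφsupp).mono fun y => mem_closedBall_zero_iff.1
  set Ψ : EuclideanSpace ℝ (Fin n) × EuclideanSpace ℝ (Fin n) → EuclideanSpace ℝ (Fin n) :=
    fun q => q.1 - (lam * ρ q.1) • q.2
  have hΨ : Measurable Ψ := by have := hρ.continuous; fun_prop
  have hmap := map_prod_sub_mul_smul_le volume ν hball (hρ.differentiable one_ne_zero) hgrad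
    hlam hlamC
  have hp0 : ENNReal.ofReal p ≠ ∞ := ofReal_ne_top
  have hp1 : 1 ≤ ENNReal.ofReal p := by rw [← ofReal_one]; exact ofReal_le_ofReal hp
  have hF := hu.comp_of_map_le hΨ.aemeasurable hp0 ofNat_ne_top hmap
  have hsmul : ∀ x y, φ y • (u ∘ Ψ) (x, y) = u (x - (lam * ρ x) • y) * φ y :=
    fun x y => mul_comm _ _
  have hvF : v = fun x => ∫ y, (u ∘ Ψ) (x, y) ∂ν := funext fun x => by
    simp only [hv x, ν, integral_withDensity_ofReal hφm hφ0, hsmul]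
  refine ⟨?_, ?_⟩
  · filter_upwards [hF.ae_integrable_prodMk_left hp1 hp0] with x hx
    simpa only [ν, integrable_withDensity_ofReal_iff hφm hφ0, hsmul] using hx
  · calc eLpNorm v (ENNReal.ofReal p) volume
        ≤ eLpNorm (u ∘ Ψ) (ENNReal.ofReal p) (volume.prod ν) :=
          hvF ▸ hF.eLpNorm_integral_prod_left_le hp1 hp0
      _ ≤ 2 ^ (1 / ENNReal.ofReal p).toReal * eLpNorm u (ENNReal.ofReal p) volume :=
          eLpNorm_comp_le_of_map_le hΨ.aemeasurable hp0 hmap hu.1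
      _ = _ := by
        rw [toReal_div, toReal_one, toReal_ofReal (by linarith), ← ofReal_rpow_of_pos two_pos,
          ofReal_ofNat]

/-- `L^p` stability of the variable-scale mollification in Lemma 4.1: with
`ρ ≥ 0` a `C¹` function with `|∇ρ| ≤ C₀`, `λ > 0` with `λC₀ ≤ 1/2`, and `φ ≥ 0` a
continuous mollifier supported in the closed unit ball with `∫ φ = 1`, for every
`p ∈ [1,∞)` and `u ∈ L^p(ℝⁿ)`, the function `v(x) = ∫ u(x − λρ(x)y) φ(y) dy` is defined
for a.e. `x` and `‖v‖_{L^p} ≤ 2^{1/p} ‖u‖_{L^p}`. -/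
theorem stmt_15 (n : ℕ) (hn : 1 ≤ n) (C₀ lam : ℝ)
    (ρ : EuclideanSpace ℝ (Fin n) → ℝ)
    (hρ : ContDiff ℝ 1 ρ) (hρ0 : ∀ x, 0 ≤ ρ x)
    (hgrad : ∀ x, ‖gradient ρ x‖ ≤ C₀)
    (hlam : 0 < lam) (hlamC : lam * C₀ ≤ 1 / 2)
    (φ : EuclideanSpace ℝ (Fin n) → ℝ)
    (hφc : Continuous φ) (hφ0 : ∀ y, 0 ≤ φ y)
    (hφsupp : Function.support φ ⊆ Metric.closedBall 0 1)
    (hφint : ∫ y, φ y = 1)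
    (p : ℝ) (hp : 1 ≤ p)
    (u : EuclideanSpace ℝ (Fin n) → ℝ)
    (hu : MemLp u (ENNReal.ofReal p) volume)
    (v : EuclideanSpace ℝ (Fin n) → ℝ)
    (hv : ∀ x, v x = ∫ y, u (x - (lam * ρ x) • y) * φ y) :
    (∀ᵐ x : EuclideanSpace ℝ (Fin n),
        Integrable (fun y => u (x - (lam * ρ x) • y) * φ y)) ∧
      eLpNorm v (ENNReal.ofReal p) volume ≤
        ENNReal.ofReal ((2 : ℝ) ^ (1 / p)) * eLpNorm u (ENNReal.ofReal p) volume :=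
  stmt_15_general n C₀ lam ρ hρ hgrad hlam hlamC φ hφ0 hφsupp hφint p hp u hu v hv
end
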